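/- arXiv:2505.21229 — 5 statements merged into one kernel-verified Lean document; each statement's English description precedes it below -/
import Mathlib

section
/- In any CA instance (possibly with downward-feasible constraints on students), every pair-stable matching is first-coalition-stable, every first-coalition-stable matching is coalition-stable, and every coalition-stable matching is pair-size-stable. -/
open Finset

/-- An instance of the Course Allocation problem: students `S`, courses `C`,
mutual acceptability `acc`, strict preferences of students over (acceptable) courses
and of courses over (acceptable) students, positive credits, upper quotas and credit limits. -/
structure CA (S C : Type*) where
  acc : S → C → Prop
  sPref : S → C → C → Prop
  cPref : C → S → S → Prop
  credits : C → ℚ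
  quota : C → ℕ
  limit : S → ℚ
  credits_pos : ∀ c, 0 < credits c
  sPref_irrefl : ∀ s c, ¬ sPref s c c
  sPref_trans : ∀ s c₁ c₂ c₃, sPref s c₁ c₂ → sPref s c₂ c₃ → sPref s c₁ c₃
  sPref_total : ∀ s c₁ c₂, acc s c₁ → acc s c₂ → c₁ ≠ c₂ → sPref s c₁ c₂ ∨ sPref s c₂ c₁
  cPref_irrefl : ∀ c s, ¬ cPref c s s
  cPref_trans : ∀ c s₁ s₂ s₃, cPref c s₁ s₂ → cPref c s₂ s₃ → cPref c s₁ s₃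
  cPref_total : ∀ c s₁ s₂, acc s₁ c → acc s₂ c → s₁ ≠ s₂ → cPref c s₁ s₂ ∨ cPref c s₂ s₁

section CourseAllocation

variable {S C : Type*} [DecidableEq S] [DecidableEq C]

/-- The set `C_M(s)` of courses assigned to student `s` in assignment `M`. -/
def CM (M : Finset (S × C)) (s : S) : Finset C :=
  (M.filter fun p => p.1 = s).image Prod.snd

/-- The set `S_M(c)` of students assigned to course `c` in assignment `M`. -/
def SM (M : Finset (S × C)) (c : C) : Finset S :=
  (M.filter fun p => p.2 = c).image Prod.fst

/-- The total number of credits `O(D)` of a set of courses `D`. -/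
def CA.O (I : CA S C) (D : Finset C) : ℚ := ∑ c ∈ D, I.credits c

/-- `M` is a matching: all pairs acceptable, credit limits and upper quotas respected. -/
def CA.IsMatching (I : CA S C) (M : Finset (S × C)) : Prop :=
  (∀ p ∈ M, I.acc p.1 p.2) ∧
  (∀ s, I.O (CM M s) ≤ I.limit s) ∧
  (∀ c, (SM M c).card ≤ I.quota c)

/-- Feasibility of a matching with respect to families `F` of feasible course sets. -/
def Feasible (F : S → Set (Finset C)) (M : Finset (S × C)) : Prop :=
  ∀ s, CM M s ∈ F s

/-- `F` is a family of downward-feasible constraints: every feasible set consists of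
acceptable courses, and subsets of feasible sets are feasible. -/
def CA.DownwardFeasible (I : CA S C) (F : S → Set (Finset C)) : Prop :=
  (∀ s, ∀ D ∈ F s, ∀ c ∈ D, I.acc s c) ∧
  (∀ s, ∀ D ∈ F s, ∀ D' ⊆ D, D' ∈ F s)

/-- Absent downward-feasible constraints (every set of courses feasible). -/
def noF : S → Set (Finset C) := fun _ => Set.univ

/-- Condition (1) of all blocking definitions: course `c` is undersubscribed in `M`
or prefers `s` to one of its assigned students. -/
def CA.Wants (I : CA S C) (M : Finset (S × C)) (s : S) (c : C) : Prop :=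
  (SM M c).card < I.quota c ∨ ∃ s' ∈ SM M c, I.cPref c s s'

/-- `(s, c)` is a blocking pair of `M` (w.r.t. feasibility constraints `F`). -/
def CA.BlockingPair (I : CA S C) (F : S → Set (Finset C)) (M : Finset (S × C))
    (s : S) (c : C) : Prop :=
  I.acc s c ∧ (s, c) ∉ M ∧ I.Wants M s c ∧
  ∃ D ⊆ CM M s, (∀ c' ∈ D, I.sPref s c c') ∧
    I.O (CM M s) - I.O D + I.credits c ≤ I.limit s ∧
    (CM M s \ D) ∪ {c} ∈ F s

def CA.PairStable (I : CA S C) (F : S → Set (Finset C)) (M : Finset (S × C)) : Prop :=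
  ∀ s c, ¬ I.BlockingPair F M s c

/-- `(s, c)` is a size-blocking pair of `M`: like a blocking pair, but additionally
the dropped set `D` must satisfy `O(D) ≤ O(c)`. -/
def CA.SizeBlockingPair (I : CA S C) (F : S → Set (Finset C)) (M : Finset (S × C))
    (s : S) (c : C) : Prop :=
  I.acc s c ∧ (s, c) ∉ M ∧ I.Wants M s c ∧
  ∃ D ⊆ CM M s, (∀ c' ∈ D, I.sPref s c c') ∧ I.O D ≤ I.credits c ∧
    I.O (CM M s) - I.O D + I.credits c ≤ I.limit s ∧
    (CM M s \ D) ∪ {c} ∈ F s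

def CA.PairSizeStable (I : CA S C) (F : S → Set (Finset C)) (M : Finset (S × C)) : Prop :=
  ∀ s c, ¬ I.SizeBlockingPair F M s c

/-- `(s, B)` is a blocking coalition of `M`. -/
def CA.BlockingCoalition (I : CA S C) (F : S → Set (Finset C)) (M : Finset (S × C))
    (s : S) (B : Finset C) : Prop :=
  B.Nonempty ∧ (∀ c ∈ B, I.acc s c ∧ (s, c) ∉ M) ∧ (∀ c ∈ B, I.Wants M s c) ∧
  ∃ D ⊆ CM M s, (∀ c ∈ B, ∀ c' ∈ D, I.sPref s c c') ∧ I.O D ≤ I.O B ∧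
    I.O (CM M s) - I.O D + I.O B ≤ I.limit s ∧
    (CM M s \ D) ∪ B ∈ F s

def CA.CoalitionStable (I : CA S C) (F : S → Set (Finset C)) (M : Finset (S × C)) : Prop :=
  ∀ s B, ¬ I.BlockingCoalition F M s B

/-- `(s, B)` is a first-blocking coalition of `M`: as a blocking coalition, except that
`s` need only prefer her most-preferred course of `B` to her most-preferred course of `D`
(equivalently, some course of `B` is preferred to every course of `D`; vacuous if `D = ∅`). -/
def CA.FirstBlockingCoalition (I : CA S C) (F : S → Set (Finset C)) (M : Finset (S × C))
    (s : S) (B : Finset C) : Prop :=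
  B.Nonempty ∧ (∀ c ∈ B, I.acc s c ∧ (s, c) ∉ M) ∧ (∀ c ∈ B, I.Wants M s c) ∧
  ∃ D ⊆ CM M s, (∃ b ∈ B, ∀ c' ∈ D, I.sPref s b c') ∧ I.O D ≤ I.O B ∧
    I.O (CM M s) - I.O D + I.O B ≤ I.limit s ∧
    (CM M s \ D) ∪ B ∈ F s

def CA.FirstCoalitionStable (I : CA S C) (F : S → Set (Finset C)) (M : Finset (S × C)) : Prop :=
  ∀ s B, ¬ I.FirstBlockingCoalition F M s B

/-- Every course exactly fills its upper quota. -/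
def CA.CourseComplete (I : CA S C) (M : Finset (S × C)) : Prop :=
  ∀ c, (SM M c).card = I.quota c

/-- Every student takes as many credits as her credit limit. -/
def CA.StudentComplete (I : CA S C) (M : Finset (S × C)) : Prop :=
  ∀ s, I.O (CM M s) = I.limit s

/-- The size of a matching: total number of credits taken by all students. -/
def CA.size [Fintype S] (I : CA S C) (M : Finset (S × C)) : ℚ :=
  ∑ s : S, I.O (CM M s)

/-- `ml` is a master list of students for the instance `I`: a strict total order on
students with which every course's preferences are consistent. -/
def CA.MasterList (I : CA S C) (ml : S → S → Prop) : Prop :=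
  (∀ s, ¬ ml s s) ∧ (∀ s₁ s₂ s₃, ml s₁ s₂ → ml s₂ s₃ → ml s₁ s₃) ∧
  (∀ s₁ s₂, s₁ ≠ s₂ → ml s₁ s₂ ∨ ml s₂ s₁) ∧
  (∀ c s s', I.acc s c → I.acc s' c → (I.cPref c s s' ↔ ml s s'))

end CourseAllocation
/-- In any CA instance (possibly with downward-feasible constraints),
every pair-stable matching is first-coalition-stable, every first-coalition-stable
matching is coalition-stable, and every coalition-stable matching is pair-size-stable. -/
theorem pair_stable_implies_first_coalition_implies_coalition_implies_pair_size
    {S C : Type*} [DecidableEq S] [DecidableEq C]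
    (I : CA S C) (F : S → Set (Finset C)) (hF : I.DownwardFeasible F)
    (M : Finset (S × C)) (hM : I.IsMatching M) :
    (I.PairStable F M → I.FirstCoalitionStable F M) ∧
    (I.FirstCoalitionStable F M → I.CoalitionStable F M) ∧
    (I.CoalitionStable F M → I.PairSizeStable F M) := by
  refine ⟨?_, ?_, ?_⟩
  · intro hPS s B hFB
    obtain ⟨⟨b0, hb0⟩, hacc, hwants, D, hD, ⟨b, hbB, hbD⟩, hOD, hlim, hfeas⟩ := hFB
    apply hPS s b
    refine ⟨(hacc b hbB).1, (hacc b hbB).2, hwants b hbB, D, hD, hbD, ?_, ?_⟩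
    · have hb_le : I.credits b ≤ I.O B :=
        Finset.single_le_sum (fun c _ => (I.credits_pos c).le) hbB
      linarith
    · have hsub : (CM M s \ D) ∪ {b} ⊆ (CM M s \ D) ∪ B :=
        Finset.union_subset_union_right (Finset.singleton_subset_iff.mpr hbB)
      exact hF.2 s _ hfeas _ hsub
  · intro hFC s B hBC
    obtain ⟨hne, hacc, hwants, D, hD, hpref, hOD, hlim, hfeas⟩ := hBC
    obtain ⟨b, hbB⟩ := hne
    exact hFC s B ⟨⟨b, hbB⟩, hacc, hwants, D, hD, ⟨b, hbB, fun c' hc' => hpref b hbB c' hc'⟩,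
      hOD, hlim, hfeas⟩
  · intro hCS s c hSB
    obtain ⟨hacc, hnM, hwants, D, hD, hpref, hODc, hlim, hfeas⟩ := hSB
    apply hCS s {c}
    refine ⟨Finset.singleton_nonempty c, ?_, ?_, D, hD, ?_, ?_, ?_, ?_⟩
    · intro c' hc'; rw [Finset.mem_singleton] at hc'; subst hc'; exact ⟨hacc, hnM⟩
    · intro c' hc'; rw [Finset.mem_singleton] at hc'; subst hc'; exact hwants
    · intro c' hc' d hd; rw [Finset.mem_singleton] at hc'; subst hc'; exact hpref d hd
    · simpa [CA.O] using hODc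
    · simpa [CA.O] using hlim
    · exact hfeas
end

section
/- Every CA-ML instance, possibly with downward-feasible constraints on students, has exactly one feasible pair-stable matching: if M and M' are feasible pair-stable matchings then M = M'. -/
open Finset

open scoped symmDiff

/-! Let `s` be the first student on the master list whose course sets in `M` and `M'` differ,
and `c` her favourite course in the difference, say `c ∈ C_{M'}(s) \ C_M(s)`. Then `(s, c)` blocks
`M`: `s` may drop `C_M(s) \ C_{M'}(s)`, all worse than `c`, and what remains fits inside
`C_{M'}(s)`; and `c` wants `s`, because the students ranked above `s` occupy the same seats in
`M` and `M'`. -/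

theorem Finset.exists_minimal_of_irrefl_of_trans {α : Type*} {r : α → α → Prop}
    (irrefl : ∀ a, ¬ r a a) (trans : ∀ a b c, r a b → r b c → r a c)
    {s : Finset α} (hs : s.Nonempty) : ∃ a ∈ s, ∀ x ∈ s, ¬ r x a := by
  let _ : IsStrictOrder α r := { irrefl, trans }
  obtain ⟨a, ha, hmin⟩ := (Set.wellFoundedOn_iff.mp (s.wellFoundedOn (r := r))).has_min s hs
  exact ⟨a, ha, fun x hx hxa => hmin x hx ⟨hxa, hx, ha⟩⟩

theorem CA.exists_favourite {S C : Type*} (I : CA S C) (s : S) {G : Finset C} (hG : G.Nonempty)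
    (hacc : ∀ c ∈ G, I.acc s c) : ∃ c ∈ G, ∀ c' ∈ G, c' ≠ c → I.sPref s c c' := by
  obtain ⟨c, hc, hmin⟩ :=
    Finset.exists_minimal_of_irrefl_of_trans (I.sPref_irrefl s) (I.sPref_trans s) hG
  refine ⟨c, hc, fun c' hc' hne => ?_⟩
  exact (I.sPref_total s c c' (hacc c hc) (hacc c' hc') hne.symm).resolve_right (hmin c' hc')

theorem CA.O_sub_O_sdiff_add_credits_le {S C : Type*} [DecidableEq C] (I : CA S C)
    {A B : Finset C} {c : C} (hcB : c ∈ B) (hcA : c ∉ A) :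
    I.O A - I.O (A \ B) + I.credits c ≤ I.O B := by
  have hsplit : I.O (A \ B) + I.O (A ∩ B) = I.O A := by
    simpa [O] using Finset.sum_sdiff (f := I.credits) (Finset.inter_subset_left (s₂ := B))
  have hinsert : I.O (insert c (A ∩ B)) = I.credits c + I.O (A ∩ B) :=
    Finset.sum_insert (by simp [hcA])
  have hmono : I.O (insert c (A ∩ B)) ≤ I.O B :=
    Finset.sum_le_sum_of_subset_of_nonneg (Finset.insert_subset hcB Finset.inter_subset_right)
      fun c _ _ => (I.credits_pos c).le
  linarith

section CourseAllocation

variable {S C : Type*} [DecidableEq S] [DecidableEq C]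

@[simp]
theorem mem_CM {M : Finset (S × C)} {s : S} {c : C} : c ∈ CM M s ↔ (s, c) ∈ M := by
  simp [CM]

@[simp]
theorem mem_SM {M : Finset (S × C)} {s : S} {c : C} : s ∈ SM M c ↔ (s, c) ∈ M := by
  simp [SM]

theorem CM_symmDiff (M M' : Finset (S × C)) (s : S) : CM (M ∆ M') s = CM M s ∆ CM M' s := by
  ext c
  simp [Finset.mem_symmDiff]

namespace CA

variable {I : CA S C} {ml : S → S → Prop} {F : S → Set (Finset C)} {M M' : Finset (S × C)}
  {s : S} {c : C}

theorem exists_first_disagreement (hml : I.MasterList ml) (hne : M ≠ M') :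
    ∃ s, CM M s ≠ CM M' s ∧ ∀ t, ml t s → CM M t = CM M' t := by
  have hmem : ∀ t, t ∈ (M ∆ M').image Prod.fst ↔ CM M t ≠ CM M' t := fun t => by
    rw [← Finset.symmDiff_nonempty, ← CM_symmDiff]
    simp [Finset.Nonempty]
  obtain ⟨s, hs, hmin⟩ := Finset.exists_minimal_of_irrefl_of_trans hml.1 hml.2.1
    (Finset.symmDiff_nonempty.mpr hne |>.image Prod.fst)
  exact ⟨s, (hmem s).mp hs, fun t hts => not_not.mp fun ht => hmin t ((hmem t).mpr ht) hts⟩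

/-- If `c` rejected `s` in `M`, all of `S_M(c)` would rank above `s`, hence sit in `c` in `M'`
as well, together with `s`: over quota. -/
theorem wants_of_agree_above (hml : I.MasterList ml) (hM : I.IsMatching M)
    (hM' : I.IsMatching M') (hagree : ∀ t, ml t s → CM M t = CM M' t)
    (hscM' : (s, c) ∈ M') (hscM : (s, c) ∉ M) : I.Wants M s c := by
  by_contra hwants
  obtain ⟨hfull, hbeaten⟩ := not_or.mp hwants
  have hsub : insert s (SM M c) ⊆ SM M' c := by
    refine Finset.insert_subset (mem_SM.mpr hscM') fun t ht => ?_
    have htc : (t, c) ∈ M := mem_SM.mp ht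
    have hts : t ≠ s := by rintro rfl; exact hscM htc
    have hbetter : ml t s := (hml.2.2.1 t s hts).resolve_right fun hst =>
      hbeaten ⟨t, ht, (hml.2.2.2 c s t (hM'.1 _ hscM') (hM.1 _ htc)).mpr hst⟩
    simpa [hagree t hbetter] using mem_CM.mpr htc
  have hcard := Finset.card_le_card hsub
  rw [Finset.card_insert_of_notMem fun h => hscM (mem_SM.mp h)] at hcard
  have := hM'.2.2 c
  omega

theorem blockingPair_of_agree_above (hml : I.MasterList ml) (hF : I.DownwardFeasible F)
    (hM : I.IsMatching M) (hM' : I.IsMatching M') (hMf' : Feasible F M')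
    (hagree : ∀ t, ml t s → CM M t = CM M' t) (hcM' : c ∈ CM M' s) (hcM : c ∉ CM M s)
    (hbest : ∀ c' ∈ CM M s ∆ CM M' s, c' ≠ c → I.sPref s c c') : I.BlockingPair F M s c := by
  have hscM' : (s, c) ∈ M' := mem_CM.mp hcM'
  have hdrop : ∀ c' ∈ CM M s \ CM M' s, I.sPref s c c' := fun c' hc' =>
    hbest c' (Finset.mem_symmDiff.mpr (Or.inl (Finset.mem_sdiff.mp hc')))
      fun h => hcM (h ▸ (Finset.mem_sdiff.mp hc').1)
  refine ⟨hM'.1 _ hscM', fun h => hcM (mem_CM.mpr h),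
    wants_of_agree_above hml hM hM' hagree hscM' fun h => hcM (mem_CM.mpr h),
    CM M s \ CM M' s, Finset.sdiff_subset, hdrop,
    (I.O_sub_O_sdiff_add_credits_le hcM' hcM).trans (hM'.2.1 s), ?_⟩
  rw [Finset.sdiff_sdiff_self_left]
  refine hF.2 s _ (hMf' s) _ (Finset.union_subset Finset.inter_subset_right ?_)
  simpa using hcM'

end CA

end CourseAllocation

theorem unique_feasible_pairStable_of_masterList_general
    {S C : Type*} [DecidableEq S] [DecidableEq C]
    (I : CA S C) (ml : S → S → Prop) (hml : I.MasterList ml)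
    (F : S → Set (Finset C)) (hF : I.DownwardFeasible F)
    (M M' : Finset (S × C))
    (hM : I.IsMatching M) (hMf : Feasible F M) (hMs : I.PairStable F M)
    (hM' : I.IsMatching M') (hMf' : Feasible F M') (hMs' : I.PairStable F M') :
    M = M' := by
  by_contra hne
  obtain ⟨s, hs, hagree⟩ := CA.exists_first_disagreement hml hne
  have hacc : ∀ c ∈ CM M s ∆ CM M' s, I.acc s c := fun c hc => by
    rcases Finset.mem_symmDiff.mp hc with ⟨hc, -⟩ | ⟨hc, -⟩
    exacts [hM.1 _ (mem_CM.mp hc), hM'.1 _ (mem_CM.mp hc)]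
  obtain ⟨c, hc, hbest⟩ := I.exists_favourite s (Finset.symmDiff_nonempty.mpr hs) hacc
  rcases Finset.mem_symmDiff.mp hc with ⟨hcM, hcM'⟩ | ⟨hcM', hcM⟩
  · exact hMs' s c (CA.blockingPair_of_agree_above hml hF hM' hM hMf
      (fun t ht => (hagree t ht).symm) hcM hcM' (symmDiff_comm (CM M s) _ ▸ hbest))
  · exact hMs s c (CA.blockingPair_of_agree_above hml hF hM hM' hMf' hagree hcM' hcM hbest)

/-- Every CA-ML instance, possibly with downward-feasible constraints,
has exactly one feasible pair-stable matching. -/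
theorem unique_feasible_pairStable_of_masterList
    {S C : Type*} [Fintype S] [Fintype C] [DecidableEq S] [DecidableEq C]
    (I : CA S C) (ml : S → S → Prop) (hml : I.MasterList ml)
    (F : S → Set (Finset C)) (hF : I.DownwardFeasible F)
    (M M' : Finset (S × C))
    (hM : I.IsMatching M) (hMf : Feasible F M) (hMs : I.PairStable F M)
    (hM' : I.IsMatching M') (hMf' : Feasible F M') (hMs' : I.PairStable F M') :
    M = M' :=
  unique_feasible_pairStable_of_masterList_general I ml hml F hF M M' hM hMf hMs hM' hMf' hMs'
end

section
/- Consider the CA-ML instance with one student s1 with T(s1) = 2 and two courses c1, c2 with O(c1) = 1 and O(c2) = 2, both with upper quota 1, where s1's preference list is c1 ≻ c2 and each course's preference list contains only s1. Then {(s1,c1)} and {(s1,c2)} are two distinct first-coalition-stable matchings (and hence also coalition-stable and pair-size-stable matchings), while {(s1,c2)} is not pair-stable. -/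
open Finset

/-- Builds a `CA` instance from rank functions (smaller rank = more preferred), with a fixed
injective tie-breaking that never fires when ranks are distinct on acceptable pairs. -/
def CA.ofRanks {S C : Type*} (acc : S → C → Prop) (srank : S → C → ℕ) (crank : C → S → ℕ)
    (iS : S → ℕ) (iC : C → ℕ) (hiS : Function.Injective iS) (hiC : Function.Injective iC)
    (credits : C → ℚ) (quota : C → ℕ) (limit : S → ℚ) (hpos : ∀ c, 0 < credits c) :
    CA S C where
  acc := acc
  sPref s c c' := acc s c ∧ acc s c' ∧
    (srank s c < srank s c' ∨ (srank s c = srank s c' ∧ iC c < iC c'))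
  cPref c s s' := acc s c ∧ acc s' c ∧
    (crank c s < crank c s' ∨ (crank c s = crank c s' ∧ iS s < iS s'))
  credits := credits
  quota := quota
  limit := limit
  credits_pos := hpos
  sPref_irrefl := by rintro s c ⟨-, -, h⟩; omega
  sPref_trans := by rintro s c₁ c₂ c₃ ⟨h1, -, ha⟩ ⟨-, h2, hb⟩; exact ⟨h1, h2, by omega⟩
  sPref_total := by
    intro s c₁ c₂ h1 h2 hne
    have hi : iC c₁ ≠ iC c₂ := fun h => hne (hiC h)
    rcases Nat.lt_trichotomy (srank s c₁) (srank s c₂) with h | h | h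
    · exact Or.inl ⟨h1, h2, Or.inl h⟩
    · rcases Nat.lt_or_ge (iC c₁) (iC c₂) with h' | h'
      · exact Or.inl ⟨h1, h2, Or.inr ⟨h, h'⟩⟩
      · exact Or.inr ⟨h2, h1, Or.inr ⟨h.symm, by omega⟩⟩
    · exact Or.inr ⟨h2, h1, Or.inl h⟩
  cPref_irrefl := by rintro c s ⟨-, -, h⟩; omega
  cPref_trans := by rintro c s₁ s₂ s₃ ⟨h1, -, ha⟩ ⟨-, h2, hb⟩; exact ⟨h1, h2, by omega⟩
  cPref_total := by
    intro c s₁ s₂ h1 h2 hne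
    have hi : iS s₁ ≠ iS s₂ := fun h => hne (hiS h)
    rcases Nat.lt_trichotomy (crank c s₁) (crank c s₂) with h | h | h
    · exact Or.inl ⟨h1, h2, Or.inl h⟩
    · rcases Nat.lt_or_ge (iS s₁) (iS s₂) with h' | h'
      · exact Or.inl ⟨h1, h2, Or.inr ⟨h, h'⟩⟩
      · exact Or.inr ⟨h2, h1, Or.inr ⟨h.symm, by omega⟩⟩
    · exact Or.inr ⟨h2, h1, Or.inl h⟩
/-- The CA-ML instance of Statement 7: one student `s1 = 0` with credit limit 2 and two
courses `c1 = 0`, `c2 = 1` with credits 1 and 2 and upper quota 1, where `s1 : c1 ≻ c2`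
and each course's preference list contains only `s1` (the master list is trivial). -/
def I7 : CA (Fin 1) (Fin 2) :=
  CA.ofRanks (fun _ _ => True)
    (fun _ => ![0, 1])
    (fun _ _ => 0)
    Encodable.encode Encodable.encode Encodable.encode_injective Encodable.encode_injective
    ![1, 2] (fun _ => 1) (fun _ => 2)
    (by decide)

def M71 : Finset (Fin 1 × Fin 2) := {(0, 0)}

def M72 : Finset (Fin 1 × Fin 2) := {(0, 1)}

section Aux

variable {S C : Type*} [DecidableEq S] [DecidableEq C]

theorem first_to_coalition {I : CA S C} {F : S → Set (Finset C)} {M : Finset (S × C)}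
    (h : I.FirstCoalitionStable F M) : I.CoalitionStable F M := by
  intro s B ⟨hne, hacc, hw, D, hD, hpref, hOD, hlim, hF⟩
  obtain ⟨b, hb⟩ := hne
  exact h s B ⟨⟨b, hb⟩, hacc, hw, D, hD, ⟨b, hb, hpref b hb⟩, hOD, hlim, hF⟩

theorem Osingle (I : CA S C) (c : C) : I.O {c} = I.credits c := by
  simp [CA.O]

theorem first_to_pairsize {I : CA S C} {F : S → Set (Finset C)} {M : Finset (S × C)}
    (h : I.FirstCoalitionStable F M) : I.PairSizeStable F M := by
  intro s c ⟨hacc, hnm, hw, D, hD, hpref, hOD, hlim, hF⟩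
  refine h s {c} ⟨⟨c, mem_singleton_self c⟩, ?_, ?_, D, hD, ⟨c, mem_singleton_self c, hpref⟩,
    ?_, ?_, hF⟩
  · intro c' hc'; rw [mem_singleton] at hc'; subst hc'; exact ⟨hacc, hnm⟩
  · intro c' hc'; rw [mem_singleton] at hc'; subst hc'; exact hw
  · rwa [Osingle]
  · rwa [Osingle]

end Aux

theorem CM71 : CM M71 0 = {0} := by decide
theorem CM72 : CM M72 0 = {1} := by decide
theorem O7e : I7.O ∅ = 0 := by simp [CA.O]
theorem O70 : I7.O {0} = 1 := by simp [CA.O, I7, CA.ofRanks]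
theorem O71 : I7.O {1} = 2 := by simp [CA.O, I7, CA.ofRanks]
theorem Olim : I7.limit 0 = 2 := rfl

theorem sPref10 : ¬ I7.sPref 0 1 0 := by
  rintro ⟨-, -, h⟩
  simp only [I7, CA.ofRanks] at h
  revert h; decide

/-- `{(s1,c1)}` and `{(s1,c2)}` are two distinct first-coalition-stable
matchings of `I7` (hence also coalition-stable and pair-size-stable), while `{(s1,c2)}`
is not pair-stable. -/
theorem I7_two_stable_matchings :
    I7.IsMatching M71 ∧ I7.IsMatching M72 ∧ M71 ≠ M72 ∧
    I7.FirstCoalitionStable noF M71 ∧ I7.FirstCoalitionStable noF M72 ∧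
    I7.CoalitionStable noF M71 ∧ I7.CoalitionStable noF M72 ∧
    I7.PairSizeStable noF M71 ∧ I7.PairSizeStable noF M72 ∧
    ¬ I7.PairStable noF M72 := by
  have hmatch1 : I7.IsMatching M71 := by
    refine ⟨fun p _ => trivial, fun s => ?_, fun c => by fin_cases c <;> decide⟩
    have hs : s = 0 := Subsingleton.elim s 0
    subst hs
    rw [CM71, O70]
    show (1:ℚ) ≤ (fun _ => (2:ℚ)) 0
    norm_num
  have hmatch2 : I7.IsMatching M72 := by
    refine ⟨fun p _ => trivial, fun s => ?_, fun c => by fin_cases c <;> decide⟩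
    have hs : s = 0 := Subsingleton.elim s 0
    subst hs
    rw [CM72, O71]
    show (2:ℚ) ≤ (fun _ => (2:ℚ)) 0
    norm_num
  have hfcs1 : I7.FirstCoalitionStable noF M71 := by
    rintro s B ⟨hne, hacc, hw, D, hD, ⟨b, hb, hpref⟩, hOD, hlim, -⟩
    have hs : s = 0 := Subsingleton.elim s 0
    subst hs
    rw [CM71] at hD hlim
    -- every element of B is 1
    have hB : ∀ c ∈ B, c = 1 := by
      intro c hc
      have h0 : (0, c) ∉ M71 := (hacc c hc).2
      fin_cases c
      · exact absurd (by decide : ((0 : Fin 1), (0 : Fin 2)) ∈ M71) h0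
      · rfl
    have hBeq : B = {1} := by
      apply Finset.Subset.antisymm
      · intro c hc; rw [mem_singleton]; exact hB c hc
      · obtain ⟨b', hb'⟩ := hne
        intro c hc; rw [mem_singleton] at hc; subst hc
        rwa [← hB b' hb']
    subst hBeq
    rcases Finset.subset_singleton_iff.mp hD with hDe | hDe <;> subst hDe
    · rw [O70, O7e, O71, Olim] at hlim
      norm_num at hlim
    · rw [mem_singleton] at hb; subst hb
      exact sPref10 (hpref 0 (mem_singleton_self 0))
  have hfcs2 : I7.FirstCoalitionStable noF M72 := by
    rintro s B ⟨hne, hacc, hw, D, hD, ⟨b, hb, hpref⟩, hOD, hlim, -⟩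
    have hs : s = 0 := Subsingleton.elim s 0
    subst hs
    rw [CM72] at hD hlim
    have hB : ∀ c ∈ B, c = 0 := by
      intro c hc
      have h0 : (0, c) ∉ M72 := (hacc c hc).2
      fin_cases c
      · rfl
      · exact absurd (by decide : ((0 : Fin 1), (1 : Fin 2)) ∈ M72) h0
    have hBeq : B = {0} := by
      apply Finset.Subset.antisymm
      · intro c hc; rw [mem_singleton]; exact hB c hc
      · obtain ⟨b', hb'⟩ := hne
        intro c hc; rw [mem_singleton] at hc; subst hc
        rwa [← hB b' hb']
    subst hBeq
    rcases Finset.subset_singleton_iff.mp hD with hDe | hDe <;> subst hDe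
    · rw [O71, O7e, O70, Olim] at hlim
      norm_num at hlim
    · rw [O71, O70] at hOD
      exact absurd hOD (by norm_num)
  have hnps : ¬ I7.PairStable noF M72 := by
    intro h
    apply h 0 0
    refine ⟨trivial, by decide, Or.inl (by decide), {1}, ?_, ?_, ?_, trivial⟩
    · rw [CM72]
    · intro c' hc'; rw [mem_singleton] at hc'; subst hc'
      exact ⟨trivial, trivial, Or.inl (by decide)⟩
    · rw [CM72, O71, Olim]
      have hc : I7.credits 0 = 1 := rfl
      rw [hc]; norm_num
  exact ⟨hmatch1, hmatch2, by decide, hfcs1, hfcs2, first_to_coalition hfcs1,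
    first_to_coalition hfcs2, first_to_pairsize hfcs1, first_to_pairsize hfcs2, hnps⟩
end

section
/- Let X be a finite multiset of positive integers with sum Σ and let T be a positive integer. Construct the CA instance J(X,T) with one student s with T(s) = Σ; a course c_e with O(c_e) = e and upper quota 1 for each element e of X; and a course b with O(b) = T and upper quota 1; s's preference list puts b first, followed by the courses c_e in any fixed order, and every course's preference list contains only s. Let M = {(s, c_e) : e ∈ X}. Then the following are equivalent: (i) some submultiset of X has sum exactly T; (ii) M is not pair-size-stable; (iii) M is not coalition-stable; (iv) M is not first-coalition-stable. -/
open Finset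

/-- The CA instance `J(X,T)` of Statement 10, built from a (multi)set of positive integers
`X = {x 0, …, x (n-1)}` and a positive target `T`: one student `s` with credit limit `Σ X`;
a course `c_e = some e` with `x e` credits and quota 1 for each element, and a course
`b = none` with `T` credits and quota 1; `s` ranks `b` first and then the `c_e` in a fixed
order, and every course's preference list contains only `s`. -/
def subsetSumCA (n : ℕ) (x : Fin n → ℕ) (T : ℕ) (hx : ∀ i, 0 < x i) (hT : 0 < T) :
    CA Unit (Option (Fin n)) :=
  CA.ofRanks (fun _ _ => True)
    (fun _ c => match c with | none => 0 | some i => i.val + 1)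
    (fun _ _ => 0)
    Encodable.encode Encodable.encode Encodable.encode_injective Encodable.encode_injective
    (fun c => match c with | none => (T : ℚ) | some i => (x i : ℚ))
    (fun _ => 1)
    (fun _ => ((∑ i, x i : ℕ) : ℚ))
    (by
      rintro (_ | i)
      · show (0 : ℚ) < (T : ℚ); exact_mod_cast hT
      · show (0 : ℚ) < ((x i : ℕ) : ℚ); exact_mod_cast hx i)

/-- The matching `M = {(s, c_e) : e ∈ X}`. -/
def subsetSumM (n : ℕ) : Finset (Unit × Option (Fin n)) :=
  Finset.univ.filter fun p => p.2 ≠ none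

lemma mem_subsetSumM {n : ℕ} (c : Option (Fin n)) : ((), c) ∈ subsetSumM n ↔ c ≠ none := by
  simp [subsetSumM]

lemma CM_subsetSumM (n : ℕ) : CM (subsetSumM n) () = Finset.univ.image some := by
  ext c
  simp only [CM, subsetSumM, Finset.mem_image, Finset.mem_filter, Finset.mem_univ, true_and]
  constructor
  · rintro ⟨⟨u, c'⟩, ⟨h1, -⟩, rfl⟩
    obtain ⟨i, rfl⟩ := Option.ne_none_iff_exists.mp h1
    exact ⟨i, rfl⟩
  · rintro ⟨i, rfl⟩
    exact ⟨((), some i), ⟨Option.some_ne_none i, trivial⟩, rfl⟩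

lemma SM_subsetSumM_none (n : ℕ) : SM (subsetSumM n) (none : Option (Fin n)) = ∅ := by
  ext s
  simp [SM, subsetSumM]

lemma O_image_subsetSumCA (n : ℕ) (x : Fin n → ℕ) (T : ℕ) (hx : ∀ i, 0 < x i) (hT : 0 < T)
    (A : Finset (Fin n)) :
    (subsetSumCA n x T hx hT).O (A.image some) = ∑ i ∈ A, (x i : ℚ) := by
  unfold CA.O
  rw [Finset.sum_image (fun a _ b _ h => Option.some_injective _ h)]
  rfl

lemma O_CM_subsetSumCA (n : ℕ) (x : Fin n → ℕ) (T : ℕ) (hx : ∀ i, 0 < x i) (hT : 0 < T) :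
    (subsetSumCA n x T hx hT).O (CM (subsetSumM n) ()) = ∑ i, (x i : ℚ) := by
  rw [CM_subsetSumM, O_image_subsetSumCA]

lemma limit_subsetSumCA (n : ℕ) (x : Fin n → ℕ) (T : ℕ) (hx : ∀ i, 0 < x i) (hT : 0 < T) :
    (subsetSumCA n x T hx hT).limit () = ∑ i, (x i : ℚ) := by
  show ((∑ i, x i : ℕ) : ℚ) = _
  push_cast
  rfl

lemma extract_D (n : ℕ) (x : Fin n → ℕ) (T : ℕ) (hx : ∀ i, 0 < x i) (hT : 0 < T)
    (D : Finset (Option (Fin n))) (hD : D ⊆ CM (subsetSumM n) ())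
    (h1 : (subsetSumCA n x T hx hT).O D ≤ (T : ℚ))
    (h2 : (subsetSumCA n x T hx hT).O (CM (subsetSumM n) ()) -
        (subsetSumCA n x T hx hT).O D + (T : ℚ) ≤ (subsetSumCA n x T hx hT).limit ()) :
    ∃ A : Finset (Fin n), ∑ i ∈ A, x i = T := by
  rw [O_CM_subsetSumCA, limit_subsetSumCA] at h2
  have hOD : (subsetSumCA n x T hx hT).O D = (T : ℚ) := le_antisymm h1 (by linarith)
  refine ⟨Finset.univ.filter (fun i => some i ∈ D), ?_⟩
  have himg : (Finset.univ.filter (fun i => some i ∈ D)).image some = D := by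
    ext c
    simp only [Finset.mem_image, Finset.mem_filter, Finset.mem_univ, true_and]
    constructor
    · rintro ⟨i, hi, rfl⟩; exact hi
    · intro hc
      have := hD hc
      rw [CM_subsetSumM] at this
      simp only [Finset.mem_image, Finset.mem_univ, true_and] at this
      obtain ⟨i, rfl⟩ := this
      exact ⟨i, hc, rfl⟩
  rw [← himg, O_image_subsetSumCA] at hOD
  exact_mod_cast hOD

lemma forward_sizeBlocking (n : ℕ) (x : Fin n → ℕ) (T : ℕ) (hx : ∀ i, 0 < x i) (hT : 0 < T)
    (A : Finset (Fin n)) (hA : ∑ i ∈ A, x i = T) :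
    (subsetSumCA n x T hx hT).SizeBlockingPair noF (subsetSumM n) () none := by
  have hOA : (subsetSumCA n x T hx hT).O (A.image some) = (T : ℚ) := by
    rw [O_image_subsetSumCA]; exact_mod_cast hA
  refine ⟨trivial, by simp [subsetSumM], Or.inl ?_, A.image some, ?_, ?_, ?_, ?_, trivial⟩
  · rw [SM_subsetSumM_none]; exact Nat.one_pos
  · rw [CM_subsetSumM]; exact Finset.image_subset_image (Finset.subset_univ A)
  · rintro c' hc'
    rw [Finset.mem_image] at hc'
    obtain ⟨i, -, rfl⟩ := hc'
    exact ⟨trivial, trivial, Or.inl (Nat.succ_pos _)⟩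
  · rw [hOA]; exact le_of_eq rfl
  · have hc : (subsetSumCA n x T hx hT).credits none = (T : ℚ) := rfl
    rw [hOA, hc, O_CM_subsetSumCA, limit_subsetSumCA]
    linarith [le_refl (0:ℚ)]

lemma forward_coalition (n : ℕ) (x : Fin n → ℕ) (T : ℕ) (hx : ∀ i, 0 < x i) (hT : 0 < T)
    (A : Finset (Fin n)) (hA : ∑ i ∈ A, x i = T) :
    (subsetSumCA n x T hx hT).BlockingCoalition noF (subsetSumM n) () {none} := by
  have hOA : (subsetSumCA n x T hx hT).O (A.image some) = (T : ℚ) := by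
    rw [O_image_subsetSumCA]; exact_mod_cast hA
  have hOB : (subsetSumCA n x T hx hT).O {none} = (T : ℚ) := by
    unfold CA.O; rw [Finset.sum_singleton]; rfl
  refine ⟨⟨none, Finset.mem_singleton_self none⟩, ?_, ?_, A.image some, ?_, ?_, ?_, ?_, trivial⟩
  · intro c hc
    rw [Finset.mem_singleton] at hc; subst hc
    exact ⟨trivial, by simp [subsetSumM]⟩
  · intro c hc
    rw [Finset.mem_singleton] at hc; subst hc
    exact Or.inl (by rw [SM_subsetSumM_none]; exact Nat.one_pos)
  · rw [CM_subsetSumM]; exact Finset.image_subset_image (Finset.subset_univ A)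
  · intro c hc c' hc'
    rw [Finset.mem_singleton] at hc; subst hc
    rw [Finset.mem_image] at hc'
    obtain ⟨i, -, rfl⟩ := hc'
    exact ⟨trivial, trivial, Or.inl (Nat.succ_pos _)⟩
  · rw [hOA, hOB]
  · rw [hOA, hOB, O_CM_subsetSumCA, limit_subsetSumCA]; linarith [le_refl (0:ℚ)]

/-- Some submultiset of `X` sums to exactly `T` iff `M` is not
pair-size-stable, iff `M` is not coalition-stable, iff `M` is not first-coalition-stable. -/
theorem subsetSum_iff_not_stable (n : ℕ) (x : Fin n → ℕ) (T : ℕ)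
    (hx : ∀ i, 0 < x i) (hT : 0 < T) :
    ((∃ A : Finset (Fin n), ∑ i ∈ A, x i = T) ↔
      ¬ (subsetSumCA n x T hx hT).PairSizeStable noF (subsetSumM n)) ∧
    ((∃ A : Finset (Fin n), ∑ i ∈ A, x i = T) ↔
      ¬ (subsetSumCA n x T hx hT).CoalitionStable noF (subsetSumM n)) ∧
    ((∃ A : Finset (Fin n), ∑ i ∈ A, x i = T) ↔
      ¬ (subsetSumCA n x T hx hT).FirstCoalitionStable noF (subsetSumM n)) := by
  have key : ∀ (B : Finset (Option (Fin n))), B.Nonempty →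
      (∀ c ∈ B, ((), c) ∉ subsetSumM n) → B = {none} := by
    intro B hne hB
    refine Finset.eq_singleton_iff_nonempty_unique_mem.mpr ⟨hne, fun c hc => ?_⟩
    by_contra hcn
    exact hB c hc ((mem_subsetSumM c).mpr hcn)
  have hOB : (subsetSumCA n x T hx hT).O {none} = (T : ℚ) := by
    unfold CA.O; rw [Finset.sum_singleton]; rfl
  have bwd_fc : ∀ (s : Unit) (B : Finset (Option (Fin n))),
      (subsetSumCA n x T hx hT).FirstBlockingCoalition noF (subsetSumM n) s B →
      ∃ A : Finset (Fin n), ∑ i ∈ A, x i = T := by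
    rintro ⟨⟩ B ⟨hne, hacc, -, D, hD, -, hODB, hlim, -⟩
    have hBeq : B = {none} := key B hne (fun c hc => (hacc c hc).2)
    subst hBeq
    rw [hOB] at hODB hlim
    exact extract_D n x T hx hT D hD hODB hlim
  refine ⟨⟨?_, ?_⟩, ⟨?_, ?_⟩, ⟨?_, ?_⟩⟩
  · rintro ⟨A, hA⟩ hst
    exact hst () none (forward_sizeBlocking n x T hx hT A hA)
  · intro h
    rw [CA.PairSizeStable] at h
    push_neg at h
    obtain ⟨⟨⟩, c, -, hnm, -, D, hD, -, hOD, hlim, -⟩ := h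
    have hc : c = none := by
      by_contra hcn
      exact hnm ((mem_subsetSumM c).mpr hcn)
    subst hc
    exact extract_D n x T hx hT D hD hOD hlim
  · rintro ⟨A, hA⟩ hst
    exact hst () {none} (forward_coalition n x T hx hT A hA)
  · intro h
    rw [CA.CoalitionStable] at h
    push_neg at h
    obtain ⟨⟨⟩, B, hne, hacc, -, D, hD, -, hODB, hlim, -⟩ := h
    have hBeq : B = {none} := key B hne (fun c hc => (hacc c hc).2)
    subst hBeq
    rw [hOB] at hODB hlim
    exact extract_D n x T hx hT D hD hODB hlim
  · rintro ⟨A, hA⟩ hst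
    obtain ⟨h1, h2, h3, D, hD, hpref, h4, h5, h6⟩ := forward_coalition n x T hx hT A hA
    exact hst () {none} ⟨h1, h2, h3, D, hD,
      ⟨none, Finset.mem_singleton_self none, hpref none (Finset.mem_singleton_self none)⟩,
      h4, h5, h6⟩
  · intro h
    rw [CA.FirstCoalitionStable] at h
    push_neg at h
    obtain ⟨s, B, hb⟩ := h
    exact bwd_fc s B hb
end

section
/- Let I be an HRS instance in which every resident has size 1 or 2, every hospital has upper quota 2, and every preference list has length at most 3. Construct the CA instance J(I) as follows: every resident r_j becomes a course c_j with upper quota 1 and O(c_j) equal to the size of r_j; every hospital h_i becomes a student s_i with T(s_i) = 2; all preference lists are transferred via this bijection; additionally, for each student s_i a dummy course c_i' with O(c_i') = 1 and upper quota 1 is appended at the end of s_i's preference list, and c_i''s preference list contains only s_i. Then J(I) admits a first-coalition-stable matching if and only if I admits a stable matching. -/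
open Finset

/-- An instance of the Hospitals/Residents problem with Sizes (HRS): residents `R` with
positive sizes, hospitals `H` with upper quotas, mutual acceptability and strict
preference lists on both sides. -/
structure HRS (R H : Type*) where
  acc : R → H → Prop
  rPref : R → H → H → Prop
  hPref : H → R → R → Prop
  size : R → ℕ
  quota : H → ℕ
  size_pos : ∀ r, 0 < size r
  rPref_irrefl : ∀ r h, ¬ rPref r h h
  rPref_trans : ∀ r h₁ h₂ h₃, rPref r h₁ h₂ → rPref r h₂ h₃ → rPref r h₁ h₃
  rPref_total : ∀ r h₁ h₂, acc r h₁ → acc r h₂ → h₁ ≠ h₂ → rPref r h₁ h₂ ∨ rPref r h₂ h₁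
  rPref_dom : ∀ r h₁ h₂, rPref r h₁ h₂ → acc r h₁ ∧ acc r h₂
  hPref_irrefl : ∀ h r, ¬ hPref h r r
  hPref_trans : ∀ h r₁ r₂ r₃, hPref h r₁ r₂ → hPref h r₂ r₃ → hPref h r₁ r₃
  hPref_total : ∀ h r₁ r₂, acc r₁ h → acc r₂ h → r₁ ≠ r₂ → hPref h r₁ r₂ ∨ hPref h r₂ r₁
  hPref_dom : ∀ h r₁ r₂, hPref h r₁ r₂ → acc r₁ h ∧ acc r₂ h

section HRSDefs

variable {R H : Type*} [Fintype R] [DecidableEq R] [DecidableEq H]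

/-- The residents assigned to hospital `h` by `μ`. -/
def HRS.assigned (μ : R → Option H) (h : H) : Finset R :=
  Finset.univ.filter fun r => μ r = some h

/-- The total size of the residents assigned to hospital `h`. -/
def HRS.load (I : HRS R H) (μ : R → Option H) (h : H) : ℕ :=
  ∑ r ∈ HRS.assigned μ h, I.size r

/-- `μ` is an HRS matching: assignments are acceptable and capacities respected. -/
def HRS.IsMatching (I : HRS R H) (μ : R → Option H) : Prop :=
  (∀ r h, μ r = some h → I.acc r h) ∧ ∀ h, I.load μ h ≤ I.quota h

open Classical in
/-- `(r, h)` blocks `μ`: `r` is unmatched or prefers `h` to her hospital, and `h` has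
room for `r` once the assignees it likes less than `r` are discounted, i.e.
`q(h) - load(h) + (total size of assignees worse than r) ≥ s(r)`. -/
def HRS.Blocks (I : HRS R H) (μ : R → Option H) (r : R) (h : H) : Prop :=
  I.acc r h ∧ μ r ≠ some h ∧
  (μ r = none ∨ ∃ h', μ r = some h' ∧ I.rPref r h h') ∧
  I.size r + I.load μ h ≤
    I.quota h + ∑ r' ∈ (HRS.assigned μ h).filter (fun r' => I.hPref h r r'), I.size r'

/-- `μ` is a stable matching of the HRS instance `I`. -/
def HRS.Stable (I : HRS R H) (μ : R → Option H) : Prop :=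
  I.IsMatching μ ∧ ∀ r h, ¬ I.Blocks μ r h

end HRSDefs
/-- The CA instance `J(I)` built from an HRS instance `I`: each hospital `h` becomes a
student with credit limit 2; each resident `r` becomes a course `Sum.inl r` with upper
quota 1 and credits equal to `r`'s size; in addition each student `h` gets a dummy
1-credit course `Sum.inr h` with upper quota 1, appended at the end of `h`'s preference
list and acceptable only to `h`.  All preference lists are transferred via the bijection. -/
def JofHRS {R H : Type*} (I : HRS R H) : CA H (R ⊕ H) where
  acc i c :=
    match c with
    | .inl r => I.acc r i
    | .inr h => h = i
  sPref i c c' :=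
    match c, c' with
    | .inl r, .inl r' => I.hPref i r r'
    | .inl r, .inr h => I.acc r i ∧ h = i
    | .inr _, _ => False
  cPref c s s' :=
    match c with
    | .inl r => I.rPref r s s'
    | .inr _ => False
  credits c :=
    match c with
    | .inl r => (I.size r : ℚ)
    | .inr _ => 1
  quota _ := 1
  limit _ := 2
  credits_pos := by
    rintro (r | h)
    · show (0 : ℚ) < (I.size r : ℚ); exact_mod_cast I.size_pos r
    · show (0 : ℚ) < 1; norm_num
  sPref_irrefl := by
    rintro i (r | h)
    · exact I.hPref_irrefl i r
    · exact not_false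
  sPref_trans := by
    rintro i (r₁ | h₁) (r₂ | h₂) (r₃ | h₃) h12 h23
    · exact I.hPref_trans i r₁ r₂ r₃ h12 h23
    · exact ⟨(I.hPref_dom i r₁ r₂ h12).1, h23.2⟩
    · exact False.elim h23
    · exact False.elim h23
    · exact False.elim h12
    · exact False.elim h12
    · exact False.elim h12
    · exact False.elim h12
  sPref_total := by
    rintro i (r₁ | h₁) (r₂ | h₂) h1 h2 hne
    · exact I.hPref_total i r₁ r₂ h1 h2 (fun h => hne (congrArg Sum.inl h))
    · exact Or.inl ⟨h1, h2⟩
    · exact Or.inr ⟨h2, h1⟩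
    · exact absurd (congrArg Sum.inr (h1.trans h2.symm)) hne
  cPref_irrefl := by
    rintro (r | h) s
    · exact I.rPref_irrefl r s
    · exact not_false
  cPref_trans := by
    rintro (r | h) s₁ s₂ s₃ h12 h23
    · exact I.rPref_trans r s₁ s₂ s₃ h12 h23
    · exact False.elim h12
  cPref_total := by
    rintro (r | h) s₁ s₂ h1 h2 hne
    · exact I.rPref_total r s₁ s₂ h1 h2 hne
    · exact absurd (h1.symm.trans h2) hne

/-!
A matching `M` of `J(I)` induces the assignment `μ` of `I` with `μ r = h ↔ (h, r) ∈ M`;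
conversely, `μ` induces such an `M`, in which `h` takes its dummy course exactly when its load
is at most `1`. For any such pair, the credits that `h` keeps after dropping every course it
ranks below `r` are the total size of the residents it does not rank below `r`; so a blocking
pair `(r, h)` of `μ` is the same as a blocking pair `(h, r)` of `M` in which `h` drops everything
below `r`.

Every first-blocking coalition contains a blocking pair, which gives one direction. For the
other, let `(r, h)` block the assignment induced by a first-coalition-stable `M`. If the courses
of `h` below `r` weigh at most `s(r)`, trading them for `r` is a size-blocking pair, hence a
first-blocking coalition. Otherwise they weigh `2` and `s(r) = 1`: then `h` either swaps its
dummy for `r`, or, having no dummy, takes `r` together with its dummy in exchange for them.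
-/

lemma Finset.exists_eq_toFinset_of_card_le_one {α : Type*} {s : Finset α} (h : #s ≤ 1) :
    ∃ o : Option α, s = o.toFinset := by
  rcases Nat.le_one_iff_eq_zero_or_eq_one.1 h with h0 | h1
  · exact ⟨none, by simpa using h0⟩
  · obtain ⟨a, rfl⟩ := Finset.card_eq_one.1 h1
    exact ⟨some a, rfl⟩

namespace CA

section

variable {S C : Type*} (I : CA S C)

lemma credits_le_O {c : C} {D : Finset C} (h : c ∈ D) : I.credits c ≤ I.O D :=
  Finset.single_le_sum (fun c _ => (I.credits_pos c).le) h

lemma O_mono {D E : Finset C} (h : D ⊆ E) : I.O D ≤ I.O E :=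
  Finset.sum_le_sum_of_subset_of_nonneg h fun c _ _ => (I.credits_pos c).le

lemma O_singleton (c : C) : I.O {c} = I.credits c :=
  Finset.sum_singleton _ _

lemma O_sdiff_add [DecidableEq C] {D E : Finset C} (h : D ⊆ E) :
    I.O (E \ D) + I.O D = I.O E :=
  Finset.sum_sdiff h

end

variable {S C : Type*} [DecidableEq S] [DecidableEq C]

@[simp] lemma mem_CM {M : Finset (S × C)} {s : S} {c : C} : c ∈ CM M s ↔ (s, c) ∈ M := by
  simp [CM]

@[simp] lemma mem_SM {M : Finset (S × C)} {s : S} {c : C} : s ∈ SM M c ↔ (s, c) ∈ M := by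
  simp [SM]

variable {I : CA S C} {F : S → Set (Finset C)} {M : Finset (S × C)} {s : S}

open Classical in
noncomputable def worseCourses (I : CA S C) (M : Finset (S × C)) (s : S) (c : C) : Finset C :=
  (CM M s).filter (I.sPref s c)

lemma mem_worseCourses {c c' : C} :
    c' ∈ I.worseCourses M s c ↔ (s, c') ∈ M ∧ I.sPref s c c' := by
  simp [worseCourses]

lemma worseCourses_subset (c : C) : I.worseCourses M s c ⊆ CM M s :=
  fun _ hc' => mem_CM.2 (mem_worseCourses.1 hc').1

lemma subset_worseCourses {c : C} {D : Finset C} (hD : D ⊆ CM M s)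
    (hpref : ∀ c' ∈ D, I.sPref s c c') : D ⊆ I.worseCourses M s c :=
  fun c' hc' => mem_worseCourses.2 ⟨mem_CM.1 (hD hc'), hpref c' hc'⟩

lemma SizeBlockingPair.firstBlockingCoalition {c : C} (h : I.SizeBlockingPair F M s c) :
    I.FirstBlockingCoalition F M s {c} := by
  obtain ⟨hacc, hc, hwants, D, hD, hpref, hO, hlim, hF⟩ := h
  refine ⟨Finset.singleton_nonempty c, by simpa using ⟨hacc, hc⟩, by simpa using hwants,
    D, hD, ⟨c, Finset.mem_singleton_self c, hpref⟩, ?_, ?_, hF⟩ <;> rwa [O_singleton]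

lemma FirstCoalitionStable.pairSizeStable (h : I.FirstCoalitionStable F M) :
    I.PairSizeStable F M :=
  fun s c hc => h s {c} hc.firstBlockingCoalition

lemma FirstBlockingCoalition.exists_blockingPair
    (hF : ∀ s, ∀ D ∈ F s, ∀ D' ⊆ D, D' ∈ F s) {B : Finset C}
    (h : I.FirstBlockingCoalition F M s B) : ∃ c ∈ B, I.BlockingPair F M s c := by
  obtain ⟨-, hB, hwants, D, hD, ⟨b, hb, hpref⟩, -, hlim, hFB⟩ := h
  refine ⟨b, hb, (hB b hb).1, (hB b hb).2, hwants b hb, D, hD, hpref, ?_, ?_⟩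
  · linarith [I.credits_le_O hb]
  · exact hF s _ hFB _ (Finset.union_subset_union_right (Finset.singleton_subset_iff.2 hb))

lemma PairStable.firstCoalitionStable (hF : ∀ s, ∀ D ∈ F s, ∀ D' ⊆ D, D' ∈ F s)
    (h : I.PairStable F M) : I.FirstCoalitionStable F M := fun s _ hB =>
  let ⟨c, _, hc⟩ := hB.exists_blockingPair hF
  h s c hc

end CA

namespace HRS

variable {R H : Type*} [Fintype R] [DecidableEq H] (I : HRS R H)

open Classical in
noncomputable def loadNotWorse (μ : R → Option H) (h : H) (r : R) : ℕ :=
  ∑ r' ∈ (assigned μ h).filter (fun r' => ¬ I.hPref h r r'), I.size r'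

lemma blocks_iff {μ : R → Option H} {r : R} {h : H} :
    I.Blocks μ r h ↔ I.acc r h ∧ μ r ≠ some h ∧
      (μ r = none ∨ ∃ h', μ r = some h' ∧ I.rPref r h h') ∧
      I.size r + I.loadNotWorse μ h r ≤ I.quota h := by
  classical
  have hsplit := Finset.sum_filter_add_sum_filter_not (assigned μ h) (I.hPref h r) I.size
  unfold Blocks loadNotWorse load
  constructor <;> rintro ⟨h₁, h₂, h₃, h₄⟩ <;> refine ⟨h₁, h₂, h₃, ?_⟩ <;> omega

end HRS

namespace JofHRS

variable {R H : Type*}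

section

variable {I : HRS R H}

lemma credits_inl (r : R) : (JofHRS I).credits (Sum.inl r) = I.size r := rfl

lemma limit_eq (h : H) : (JofHRS I).limit h = 2 := rfl

lemma O_eq_natCast (E : Finset (R ⊕ H)) :
    (JofHRS I).O E = ((∑ r ∈ E.toLeft, I.size r + #E.toRight : ℕ) : ℚ) := by
  rw [CA.O, ← Finset.toLeft_disjSum_toRight (u := E), Finset.sum_disjSum]
  simp [JofHRS]

lemma O_inr (h : H) : (JofHRS I).O {Sum.inr h} = 1 := by
  simp [CA.O, JofHRS]

variable [DecidableEq R] [DecidableEq H]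

lemma O_inl_inr (r : R) (h : H) : (JofHRS I).O {Sum.inl r, Sum.inr h} = I.size r + 1 := by
  simp [CA.O, JofHRS]

variable {M : Finset (H × (R ⊕ H))} {μ : R → Option H}

lemma mem_iff_of_SM_eq (hμ : ∀ r, SM M (Sum.inl r) = (μ r).toFinset) {r : R} {h : H} :
    (h, Sum.inl r) ∈ M ↔ μ r = some h := by
  rw [← CA.mem_SM, hμ, Option.mem_toFinset, Option.mem_def]

lemma wants_inl_iff (hμ : ∀ r, SM M (Sum.inl r) = (μ r).toFinset) {r : R} {h : H} :
    (JofHRS I).Wants M h (Sum.inl r) ↔ μ r = none ∨ ∃ h', μ r = some h' ∧ I.rPref r h h' := by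
  rw [CA.Wants, hμ]
  cases μ r <;> simp [JofHRS]

lemma toLeft_CM [Fintype R] (hμ : ∀ r, SM M (Sum.inl r) = (μ r).toFinset) (h : H) :
    (CM M h).toLeft = HRS.assigned μ h := by
  ext r
  simp [HRS.assigned, mem_iff_of_SM_eq hμ]

lemma O_CM_eq_loadNotWorse_add [Fintype R] (hacc : ∀ p ∈ M, (JofHRS I).acc p.1 p.2)
    (hμ : ∀ r, SM M (Sum.inl r) = (μ r).toFinset) {r : R} {h : H} (hr : I.acc r h) :
    (JofHRS I).O (CM M h) =
      I.loadNotWorse μ h r + (JofHRS I).O ((JofHRS I).worseCourses M h (Sum.inl r)) := by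
  classical
  set K := CM M h \ (JofHRS I).worseCourses M h (Sum.inl r)
  have hleft : K.toLeft = (HRS.assigned μ h).filter (fun r' => ¬ I.hPref h r r') := by
    ext r'
    simp only [K, JofHRS, mem_toLeft, mem_sdiff, CA.mem_CM, CA.mem_worseCourses,
      mem_iff_of_SM_eq hμ, HRS.assigned, mem_filter, mem_univ, true_and]
    tauto
  have hright : K.toRight = ∅ := by
    ext h'
    simp only [K, Finset.mem_toRight, Finset.mem_sdiff, CA.mem_CM, CA.mem_worseCourses,
      Finset.notMem_empty, iff_false, not_and]
    exact fun hm hnot => hnot hm ⟨hr, hacc _ hm⟩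
  rw [← CA.O_sdiff_add _ (CA.worseCourses_subset _), O_eq_natCast K, hleft, hright, HRS.loadNotWorse]
  simp

end

section FirstCoalitionStable

variable [DecidableEq R] [DecidableEq H] {I : HRS R H} {M : Finset (H × (R ⊕ H))} {μ : R → Option H}

lemma wants_inr (hacc : ∀ p ∈ M, (JofHRS I).acc p.1 p.2) {h : H} (hd : (h, Sum.inr h) ∉ M) :
    (JofHRS I).Wants M h (Sum.inr h) := by
  left
  suffices SM M (Sum.inr h) = ∅ by simp [this, JofHRS]
  refine Finset.eq_empty_of_forall_notMem fun s hs => hd ?_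
  have hm := CA.mem_SM.1 hs
  obtain rfl : h = s := hacc _ hm
  exact hm

lemma exists_SM_eq_toFinset (hM : (JofHRS I).IsMatching M) :
    ∃ μ : R → Option H, ∀ r, SM M (Sum.inl r) = (μ r).toFinset :=
  ⟨_, fun r => (Finset.exists_eq_toFinset_of_card_le_one (hM.2.2 (Sum.inl r))).choose_spec⟩

variable [Fintype R]

lemma isMatching_of_SM_eq (hquota : ∀ h, I.quota h = 2) (hM : (JofHRS I).IsMatching M)
    (hμ : ∀ r, SM M (Sum.inl r) = (μ r).toFinset) : I.IsMatching μ := by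
  refine ⟨fun r h hrh => hM.1 _ ((mem_iff_of_SM_eq hμ).2 hrh), fun h => ?_⟩
  have hlim : (JofHRS I).O (CM M h) ≤ 2 := hM.2.1 h
  rw [O_eq_natCast, toLeft_CM hμ] at hlim
  rw [hquota, HRS.load]
  have : ∑ r ∈ HRS.assigned μ h, I.size r + #(CM M h).toRight ≤ 2 := by exact_mod_cast hlim
  omega

lemma two_lt_size_add_loadNotWorse (hM : (JofHRS I).IsMatching M)
    (hstab : (JofHRS I).FirstCoalitionStable noF M) (hμ : ∀ r, SM M (Sum.inl r) = (μ r).toFinset)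
    {r : R} {h : H} (hr : I.acc r h) (hnotin : (h, Sum.inl r) ∉ M)
    (hwants : (JofHRS I).Wants M h (Sum.inl r)) : 2 < I.size r + I.loadNotWorse μ h r := by
  by_contra! hcap
  set W := (JofHRS I).worseCourses M h (Sum.inl r)
  set k := I.loadNotWorse μ h r
  obtain ⟨w, hw⟩ : ∃ w : ℕ, (JofHRS I).O W = w := ⟨_, O_eq_natCast W⟩
  have hCM : (JofHRS I).O (CM M h) = k + w := by rw [O_CM_eq_loadNotWorse_add hM.1 hμ hr, hw]
  have hlim : k + w ≤ 2 := by
    have : (JofHRS I).O (CM M h) ≤ 2 := hM.2.1 h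
    exact_mod_cast hCM ▸ this
  have hpos := I.size_pos r
  have hWpref : ∀ c ∈ W, (JofHRS I).sPref h (Sum.inl r) c := fun _ hc =>
    (CA.mem_worseCourses.1 hc).2
  by_cases hwr : w ≤ I.size r
  · refine hstab.pairSizeStable h (Sum.inl r) ⟨hr, hnotin, hwants, W,
      CA.worseCourses_subset _, hWpref, by rw [hw, credits_inl]; exact_mod_cast hwr, ?_, trivial⟩
    rw [hCM, hw, credits_inl, limit_eq]
    qify at hcap
    linarith
  -- from here on `w = 2` and `I.size r = 1`
  by_cases hd : (h, Sum.inr h) ∈ M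
  · refine hstab.pairSizeStable h (Sum.inl r) ⟨hr, hnotin, hwants, {Sum.inr h},
      by simpa using hd, by simpa [JofHRS] using hr,
      by rw [O_inr, credits_inl]; exact_mod_cast hpos, ?_, trivial⟩
    have key : k + w + I.size r ≤ 3 := by omega
    rw [hCM, O_inr, credits_inl, limit_eq]
    qify at key
    linarith
  · refine hstab h {Sum.inl r, Sum.inr h} ⟨Finset.insert_nonempty _ _,
      by simpa [JofHRS] using ⟨⟨hr, hnotin⟩, hd⟩, by simpa using ⟨hwants, wants_inr hM.1 hd⟩,
      W, CA.worseCourses_subset _, ⟨Sum.inl r, by simp, hWpref⟩, ?_, ?_, trivial⟩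
    · rw [hw, O_inl_inr]
      exact_mod_cast (by omega : w ≤ I.size r + 1)
    · have key : k + I.size r + 1 ≤ 2 := by omega
      rw [hCM, hw, O_inl_inr, limit_eq]
      qify at key
      linarith

lemma not_blocks_of_firstCoalitionStable (hquota : ∀ h, I.quota h = 2)
    (hM : (JofHRS I).IsMatching M) (hstab : (JofHRS I).FirstCoalitionStable noF M)
    (hμ : ∀ r, SM M (Sum.inl r) = (μ r).toFinset) (r : R) (h : H) : ¬ I.Blocks μ r h := by
  rw [HRS.blocks_iff, hquota]
  rintro ⟨hr, hne, hpref, hcap⟩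
  have hnotin : (h, Sum.inl r) ∉ M := fun hm => hne ((mem_iff_of_SM_eq hμ).1 hm)
  exact hcap.not_gt
    (two_lt_size_add_loadNotWorse hM hstab hμ hr hnotin ((wants_inl_iff hμ).2 hpref))

end FirstCoalitionStable

section Stable

variable [Fintype R] [Fintype H] [DecidableEq H] (I : HRS R H) (μ : R → Option H)

open Classical in
noncomputable def matchingOf : Finset (H × (R ⊕ H)) :=
  Finset.univ.filter fun p =>
    match p.2 with
    | .inl r => μ r = some p.1
    | .inr h => h = p.1 ∧ I.load μ p.1 ≤ 1

variable {I μ}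

@[simp] lemma mem_matchingOf_inl {h : H} {r : R} :
    (h, Sum.inl r) ∈ matchingOf I μ ↔ μ r = some h := by
  simp [matchingOf]

@[simp] lemma mem_matchingOf_inr {h h' : H} :
    (h, Sum.inr h') ∈ matchingOf I μ ↔ h' = h ∧ I.load μ h ≤ 1 := by
  simp [matchingOf]

variable [DecidableEq R]

lemma SM_matchingOf_inl (r : R) : SM (matchingOf I μ) (Sum.inl r) = (μ r).toFinset := by
  ext h
  simp

lemma O_CM_matchingOf (h : H) :
    (JofHRS I).O (CM (matchingOf I μ) h) = I.load μ h + if I.load μ h ≤ 1 then 1 else 0 := by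
  have hright : (CM (matchingOf I μ) h).toRight = if I.load μ h ≤ 1 then {h} else ∅ := by
    ext h'
    split_ifs <;> simp [*]
  rw [O_eq_natCast, toLeft_CM SM_matchingOf_inl, hright, HRS.load]
  split_ifs <;> simp

lemma isMatching_matchingOf (hquota : ∀ h, I.quota h = 2) (hμ : I.IsMatching μ) :
    (JofHRS I).IsMatching (matchingOf I μ) := by
  refine ⟨?_, fun h => ?_, ?_⟩
  · rintro ⟨h, r | h'⟩ hp
    · exact hμ.1 r h (mem_matchingOf_inl.1 hp)
    · exact (mem_matchingOf_inr.1 hp).1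
  · have hload := hquota h ▸ hμ.2 h
    rw [O_CM_matchingOf, limit_eq]
    split_ifs with hle
    · exact_mod_cast Nat.add_le_add_right hle 1
    · simpa using (show (I.load μ h : ℚ) ≤ 2 by exact_mod_cast hload)
  · rintro (r | h')
    · rw [SM_matchingOf_inl, Option.card_toFinset]
      cases μ r <;> simp [JofHRS]
    · refine Finset.card_le_one.2 fun a ha b hb => ?_
      rw [CA.mem_SM, mem_matchingOf_inr] at ha hb
      exact ha.1.symm.trans hb.1

lemma pairStable_matchingOf (hquota : ∀ h, I.quota h = 2) (hμ : I.Stable μ) :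
    (JofHRS I).PairStable noF (matchingOf I μ) := by
  rintro h (r | h') ⟨hacc, hnotin, hwants, D, hD, hpref, hlim, -⟩
  · apply hμ.2 r h
    rw [HRS.blocks_iff, hquota]
    refine ⟨hacc, fun e => hnotin (mem_matchingOf_inl.2 e),
      (wants_inl_iff SM_matchingOf_inl).1 hwants, ?_⟩
    have hDW := (JofHRS I).O_mono (CA.subset_worseCourses hD hpref)
    rw [O_CM_eq_loadNotWorse_add (isMatching_matchingOf hquota hμ.1).1 SM_matchingOf_inl hacc,
      credits_inl, limit_eq] at hlim
    have : (I.size r + I.loadNotWorse μ h r : ℚ) ≤ 2 := by linarith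
    exact_mod_cast this
  · obtain rfl : h' = h := hacc
    have hD0 : D = ∅ := Finset.eq_empty_of_forall_notMem fun c hc => by
      cases c <;> exact hpref _ hc
    have hload : ¬ I.load μ h' ≤ 1 := fun hle => hnotin (mem_matchingOf_inr.2 ⟨rfl, hle⟩)
    rw [hD0, O_CM_matchingOf, if_neg hload] at hlim
    have hlim' : (I.load μ h' : ℚ) + 1 ≤ 2 := by simpa [CA.O, JofHRS] using hlim
    have : (2 : ℚ) ≤ I.load μ h' := by exact_mod_cast Nat.lt_of_not_le hload
    linarith

end Stable

end JofHRS

theorem JofHRS_firstCoalitionStable_iff_stable_general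
    {R H : Type*} [Fintype R] [Fintype H] [DecidableEq R] [DecidableEq H]
    (I : HRS R H)
    (hquota : ∀ h, I.quota h = 2) :
    (∃ M : Finset (H × (R ⊕ H)),
        (JofHRS I).IsMatching M ∧ (JofHRS I).FirstCoalitionStable noF M) ↔
    (∃ μ : R → Option H, I.Stable μ) := by
  constructor
  · rintro ⟨M, hM, hstab⟩
    obtain ⟨μ, hμ⟩ := JofHRS.exists_SM_eq_toFinset hM
    exact ⟨μ, JofHRS.isMatching_of_SM_eq hquota hM hμ,
      JofHRS.not_blocks_of_firstCoalitionStable hquota hM hstab hμ⟩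
  · rintro ⟨μ, hμ⟩
    exact ⟨JofHRS.matchingOf I μ, JofHRS.isMatching_matchingOf hquota hμ.1,
      (JofHRS.pairStable_matchingOf hquota hμ).firstCoalitionStable fun _ _ _ _ _ => trivial⟩

/-- For an HRS instance `I` in which every resident has size 1 or 2,
every hospital has upper quota 2, and every preference list has length at most 3,
the CA instance `J(I)` admits a first-coalition-stable matching iff `I` admits a
stable matching. -/
theorem JofHRS_firstCoalitionStable_iff_stable
    {R H : Type*} [Fintype R] [Fintype H] [DecidableEq R] [DecidableEq H]
    (I : HRS R H)
    (hsize : ∀ r, I.size r = 1 ∨ I.size r = 2)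
    (hquota : ∀ h, I.quota h = 2)
    (hlenR : ∀ r, {h | I.acc r h}.ncard ≤ 3)
    (hlenH : ∀ h, {r | I.acc r h}.ncard ≤ 3) :
    (∃ M : Finset (H × (R ⊕ H)),
        (JofHRS I).IsMatching M ∧ (JofHRS I).FirstCoalitionStable noF M) ↔
    (∃ μ : R → Option H, I.Stable μ) :=
  JofHRS_firstCoalitionStable_iff_stable_general I hquota
end
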